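/- arXiv:0909.3367 — 3 statements merged into one kernel-verified Lean document; each statement's English description precedes it below -/
import Mathlib

section
/- Lemma 1: Let n ≥ 1, α, β ∈ ℂ with α ≠ 0, and set λ := (α+β)/(2α) and F := α·S_5 + β·S_2·S_3 ∈ ℂ[x_0,…,x_{n+1}]. Suppose η ∈ ℂ^{n+2} satisfies S_1(η) = 0 and there exists μ ∈ ℂ with (∂F/∂x_i)(η) = μ for all i = 0,…,n+1 (i.e., η is a singular point of the hyperquintic {F = 0} in the hyperplane {S_1 = 0} ≅ ℙ^n). Then every coordinate η_i of η is a root of the quartic polynomial P(X) := X^4 − λ·C_2(η)·X^2 − (2/3)·λ·C_3(η)·X + (1/(n+2))·(λ·C_2(η)^2 − C_4(η)). -/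
/-!
From `∂ᵢ S_{k+1} + xᵢ ∂ᵢ S_k = S_k` one gets `∂ᵢ S_{k+1} = ∑_{p+q=k} (-xᵢ)^p S_q`, so on `S₁ = 0`
the partial derivative `∂ᵢF(η)` is `q(ηᵢ)` for the single quartic
`q(X) = αX⁴ + (α+β)S₂X² − (α+β)S₃X + (αS₄ + βS₂²)` whose coefficients are evaluated at `η`.
As `q(ηⱼ) = μ` for every `j`, the identity `(n+2)·q(ηᵢ) = ∑ⱼ q(ηⱼ)` eliminates the constant term,
and Newton's identities `2S₂ = −C₂`, `3S₃ = C₃` (recall `C₁ = S₁ = 0`) turn it into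
`6α(n+2)·P(ηᵢ) = 0`.
-/

open MvPolynomial Finset

theorem Multiset.esymm_cons_succ {R : Type*} [CommSemiring R] (a : R) (s : Multiset R) (k : ℕ) :
    (a ::ₘ s).esymm (k + 1) = s.esymm (k + 1) + a * s.esymm k := by
  simp [Multiset.esymm, Multiset.powersetCard_cons, Multiset.sum_map_mul_left]

theorem card_mul_sub_sum_eq_zero_of_quartic_eq_const {ι K : Type*} [Fintype ι] [CommRing K]
    {a b c d μ : K} {x : ι → K} (h : ∀ j, a * x j ^ 4 + b * x j ^ 2 - c * x j + d = μ) (i : ι) :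
    a * (Fintype.card ι * x i ^ 4 - ∑ j, x j ^ 4) + b * (Fintype.card ι * x i ^ 2 - ∑ j, x j ^ 2)
      - c * (Fintype.card ι * x i - ∑ j, x j) = 0 := by
  have hsum : ∑ j, (a * x j ^ 4 + b * x j ^ 2 - c * x j + d) = ∑ _j : ι, μ :=
    sum_congr rfl fun j _ ↦ h j
  simp only [sum_add_distrib, sum_sub_distrib, ← mul_sum, sum_const, card_univ, nsmul_eq_mul]
    at hsum
  linear_combination Fintype.card ι * h i - hsum

namespace MvPolynomial

variable {σ R : Type*} [CommRing R]

theorem pderiv_esymm_map_X_eq_zero {i : σ} {s : Multiset σ} (hi : i ∉ s) (k : ℕ) :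
    pderiv i ((s.map X).esymm k : MvPolynomial σ R) = 0 := by
  refine Multiset.sum_induction (fun p ↦ pderiv i p = 0) _ (fun p q hp hq ↦ by simp [hp, hq])
    (map_zero _) ?_
  simp only [Multiset.mem_map, Multiset.mem_powersetCard]
  rintro _ ⟨t, ⟨hts, -⟩, rfl⟩
  refine Multiset.prod_induction (fun p ↦ pderiv i p = 0) _
    (fun p q hp hq ↦ by simp [hp, hq]) pderiv_one ?_
  intro p hp
  obtain ⟨j, hj, rfl⟩ := Multiset.mem_map.mp (Multiset.mem_of_le hts hp)
  exact pderiv_X_of_ne (ne_of_mem_of_not_mem hj hi)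

variable [Fintype σ]

theorem two_mul_esymm_two : 2 * esymm σ R 2 = esymm σ R 1 * psum σ R 1 - psum σ R 2 := by
  have h := mul_esymm_eq_sum σ R 2
  norm_num [sum_filter, Nat.sum_antidiagonal_eq_sum_range_succ_mk, sum_range_succ,
    esymm_zero] at h
  rw [esymm_one, psum_one]
  linear_combination h

theorem three_mul_esymm_three :
    3 * esymm σ R 3 = psum σ R 3 - esymm σ R 1 * psum σ R 2 + esymm σ R 2 * psum σ R 1 := by
  have h := mul_esymm_eq_sum σ R 3
  norm_num [sum_filter, Nat.sum_antidiagonal_eq_sum_range_succ_mk, sum_range_succ,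
    esymm_zero] at h
  rw [esymm_one, psum_one]
  linear_combination h

variable (σ) in
noncomputable def hyperquintic (α β : R) : MvPolynomial σ R :=
  C α * esymm σ R 5 + C β * (esymm σ R 2 * esymm σ R 3)

variable [DecidableEq σ]

theorem esymm_succ_eq_erase (i : σ) (k : ℕ) :
    esymm σ R (k + 1) = ((univ.val.erase i).map X).esymm (k + 1)
      + X i * ((univ.val.erase i).map X).esymm k := by
  rw [esymm_eq_multiset_esymm]
  conv_lhs => rw [← Multiset.cons_erase (mem_univ_val i), Multiset.map_cons]
  rw [Multiset.esymm_cons_succ]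

theorem pderiv_esymm_succ_eq_erase (i : σ) (k : ℕ) :
    pderiv i (esymm σ R (k + 1)) = ((univ.val.erase i).map X).esymm k := by
  have hi : i ∉ univ.val.erase i := univ.nodup.notMem_erase
  rw [esymm_succ_eq_erase i, map_add, pderiv_mul, pderiv_esymm_map_X_eq_zero hi,
    pderiv_esymm_map_X_eq_zero hi, pderiv_X_self]
  ring

theorem pderiv_esymm_succ_add_X_mul_pderiv_esymm (i : σ) (k : ℕ) :
    pderiv i (esymm σ R (k + 1)) + X i * pderiv i (esymm σ R k) = esymm σ R k := by
  rcases k with _ | k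
  · simp [esymm_zero]
  · rw [pderiv_esymm_succ_eq_erase, pderiv_esymm_succ_eq_erase, esymm_succ_eq_erase i]

theorem pderiv_esymm_succ (i : σ) (k : ℕ) :
    pderiv i (esymm σ R (k + 1)) = ∑ p ∈ antidiagonal k, (-X i) ^ p.1 * esymm σ R p.2 := by
  induction k with
  | zero => simp
  | succ k ih =>
    rw [Nat.sum_antidiagonal_succ,
      eq_sub_of_add_eq (pderiv_esymm_succ_add_X_mul_pderiv_esymm i (k + 1)), ih, mul_sum,
      sub_eq_add_neg, ← sum_neg_distrib]
    simp [pow_succ', mul_assoc]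

theorem eval_pderiv_hyperquintic {η : σ → R} (hη : eval η (esymm σ R 1) = 0) (α β : R) (i : σ) :
    eval η (pderiv i (hyperquintic σ α β)) =
      α * η i ^ 4 + (α + β) * eval η (esymm σ R 2) * η i ^ 2
        - (α + β) * eval η (esymm σ R 3) * η i
        + (α * eval η (esymm σ R 4) + β * eval η (esymm σ R 2) ^ 2) := by
  have hsum : ∑ j, η j = 0 := by simpa [esymm_one] using hη
  simp only [hyperquintic, map_add, pderiv_mul, pderiv_esymm_succ, Nat.sum_antidiagonal_succ]
  simp [esymm_one, hsum]
  ring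

end MvPolynomial

theorem coords_of_singular_point_are_roots_of_quartic_general (n : ℕ) (α β : ℂ)
    (hα : α ≠ 0) (η : Fin (n + 2) → ℂ)
    (hS1 : eval η (esymm (Fin (n + 2)) ℂ 1) = 0)
    (μ : ℂ)
    (hsing : ∀ i, eval η (pderiv i
      (C α * esymm (Fin (n + 2)) ℂ 5
        + C β * (esymm (Fin (n + 2)) ℂ 2 * esymm (Fin (n + 2)) ℂ 3))) = μ) :
    ∀ i, (η i) ^ 4
        - (α + β) / (2 * α) * eval η (psum (Fin (n + 2)) ℂ 2) * (η i) ^ 2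
        - 2 / 3 * ((α + β) / (2 * α)) * eval η (psum (Fin (n + 2)) ℂ 3) * (η i)
        + 1 / ((n : ℂ) + 2) *
            ((α + β) / (2 * α) * (eval η (psum (Fin (n + 2)) ℂ 2)) ^ 2
              - eval η (psum (Fin (n + 2)) ℂ 4)) = 0 := by
  intro i
  have hC1 : ∑ j, η j = 0 := by simpa [esymm_one] using hS1
  have hS2 : 2 * eval η (esymm _ ℂ 2) = -∑ j, η j ^ 2 := by
    simpa [hC1, psum] using congrArg (eval η) (two_mul_esymm_two (σ := Fin (n + 2)) (R := ℂ))
  have hS3 : 3 * eval η (esymm _ ℂ 3) = ∑ j, η j ^ 3 := by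
    simpa [hC1, psum] using congrArg (eval η) (three_mul_esymm_three (σ := Fin (n + 2)) (R := ℂ))
  have havg := card_mul_sub_sum_eq_zero_of_quartic_eq_const
    (fun j ↦ (eval_pderiv_hyperquintic hS1 α β j).symm.trans (hsing j)) i
  push_cast [Fintype.card_fin] at havg
  have hN : (n : ℂ) + 2 ≠ 0 := by exact_mod_cast (n + 1).succ_ne_zero
  simp only [psum, map_sum, map_pow, eval_X]
  field_simp
  linear_combination 6 * havg - 3 * (α + β) * ((n + 2) * η i ^ 2 - ∑ j, η j ^ 2) * hS2
    + 2 * (α + β) * (n + 2) * η i * hS3 - 6 * (α + β) * eval η (esymm _ ℂ 3) * hC1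

/-- **Lemma 1.** If `η ∈ ℂ^{n+2}` with `S₁(η) = 0` is a singular point of the
hyperquintic `{α·S₅ + β·S₂·S₃ = 0}` inside `{S₁ = 0} ≅ ℙⁿ(ℂ)` (i.e. all partial derivatives of
`F = α·S₅ + β·S₂·S₃` take a common value `μ` at `η`), where `α ≠ 0`, then every coordinate
`η i` is a root of `P(X) = X⁴ − λ·C₂(η)·X² − (2/3)·λ·C₃(η)·X + (1/(n+2))·(λ·C₂(η)² − C₄(η))`,
with `λ = (α+β)/(2α)`. -/
theorem coords_of_singular_point_are_roots_of_quartic (n : ℕ) (hn : 1 ≤ n) (α β : ℂ)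
    (hα : α ≠ 0) (η : Fin (n + 2) → ℂ)
    (hS1 : eval η (esymm (Fin (n + 2)) ℂ 1) = 0)
    (μ : ℂ)
    (hsing : ∀ i, eval η (pderiv i
      (C α * esymm (Fin (n + 2)) ℂ 5
        + C β * (esymm (Fin (n + 2)) ℂ 2 * esymm (Fin (n + 2)) ℂ 3))) = μ) :
    ∀ i, (η i) ^ 4
        - (α + β) / (2 * α) * eval η (psum (Fin (n + 2)) ℂ 2) * (η i) ^ 2
        - 2 / 3 * ((α + β) / (2 * α)) * eval η (psum (Fin (n + 2)) ℂ 3) * (η i)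
        + 1 / ((n : ℂ) + 2) *
            ((α + β) / (2 * α) * (eval η (psum (Fin (n + 2)) ℂ 2)) ^ 2
              - eval η (psum (Fin (n + 2)) ℂ 4)) = 0 :=
  coords_of_singular_point_are_roots_of_quartic_general n α β hα η hS1 μ hsing
end

section
/- (Generic singularities, Case 18) Let α, β, c ∈ ℂ satisfy β·c^2 + (3α + 4β) = 0. Then the point η := (1,1,1,1,−1,−1,−1,−1,c,−c) ∈ ℂ^{10} satisfies S_1(η) = 0 and there exists μ ∈ ℂ with (∂F_{α,β}/∂x_i)(η) = μ for all i = 0,…,9; that is, η is a singular point of the hyperquintic Q_{(α:β)} in ℙ^8(ℂ). -/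
/-!
`∂S_{k+1}/∂x_i` is the `k`-th elementary symmetric polynomial in the variables other than `x_i`,
which evaluates to `∑_{j ≤ k} (-x_i)^j S_{k-j}(x)`. At `η` one has `S_1 = S_3 = 0`,
`S_2 = -(4 + c²)` and `S_4 = 6 + 4c²`, so with `s = η_i²` and `β(4 + c²) = -3α` the `i`-th partial
derivative of `F_{α,β}` at `η` is `-6α + α(s - 1)(s - c²)`, and every coordinate of `η` has
`s = 1` or `s = c²`.
-/

open MvPolynomial

namespace Multiset
variable {R : Type*} [CommSemiring R]

@[simp] theorem esymm_zero_right (s : Multiset R) : s.esymm 0 = 1 := by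
  simp [esymm]

@[simp] theorem esymm_zero_succ (k : ℕ) : (0 : Multiset R).esymm (k + 1) = 0 := by
  simp [esymm, powersetCard_zero_right]

@[simp] theorem esymm_cons_succ_s3 (a : R) (s : Multiset R) (k : ℕ) :
    (a ::ₘ s).esymm (k + 1) = s.esymm (k + 1) + a * s.esymm k := by
  simp [esymm, powersetCard_cons, map_map, sum_map_mul_left]

theorem map_esymm {S : Type*} [CommSemiring S] (f : R →+* S) (s : Multiset R) (k : ℕ) :
    f (s.esymm k) = (s.map f).esymm k := by
  simp [esymm, map_multiset_sum, map_multiset_prod, powersetCard_map, map_map]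

end Multiset

theorem Derivation.map_esymm_eq_zero {R A M : Type*} [CommSemiring R] [CommSemiring A]
    [Algebra R A] [AddCommMonoid M] [Module A M] [Module R M] (D : Derivation R A M)
    {s : Multiset A} (h : ∀ a ∈ s, D a = 0) (k : ℕ) : D (s.esymm k) = 0 := by
  induction s using Multiset.induction_on generalizing k with
  | empty => cases k <;> simp
  | cons a s ih =>
    cases k with
    | zero => simp
    | succ k =>
      have hs : ∀ b ∈ s, D b = 0 := fun b hb => h b (Multiset.mem_cons_of_mem hb)
      simp [D.leibniz, h a (Multiset.mem_cons_self a s), ih hs]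

theorem Finset.univ_val_map_eq_cons {σ α : Type*} [Fintype σ] [DecidableEq σ] (f : σ → α)
    (i : σ) : univ.val.map f = f i ::ₘ (univ.erase i).val.map f := by
  rw [← Multiset.map_cons, ← insert_val_of_notMem (notMem_erase i univ), insert_erase (mem_univ i)]

namespace MvPolynomial
open Finset
variable {σ R : Type*} [Fintype σ]

theorem eval_esymm [CommSemiring R] (x : σ → R) (k : ℕ) :
    eval x (esymm σ R k) = (univ.val.map x).esymm k := by
  rw [← coe_aeval_eq_eval]
  exact aeval_esymm_eq_multiset_esymm σ R k x

variable [DecidableEq σ]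

theorem pderiv_esymm_succ_s3 [CommSemiring R] (i : σ) (k : ℕ) :
    pderiv i (esymm σ R (k + 1)) = ((univ.erase i).val.map X).esymm k := by
  have hvanish : ∀ p ∈ (univ.erase i).val.map X, pderiv i (p : MvPolynomial σ R) = 0 := by
    simp only [Multiset.mem_map, mem_val, mem_erase]
    rintro _ ⟨j, ⟨hji, -⟩, rfl⟩
    exact pderiv_X_of_ne hji
  rw [esymm_eq_multiset_esymm, univ_val_map_eq_cons X i, Multiset.esymm_cons_succ_s3, map_add,
    pderiv_mul, pderiv_X_self, (pderiv i).map_esymm_eq_zero hvanish,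
    (pderiv i).map_esymm_eq_zero hvanish]
  ring

theorem eval_pderiv_esymm_succ [CommRing R] (x : σ → R) (i : σ) (k : ℕ) :
    eval x (pderiv i (esymm σ R (k + 1))) =
      ∑ j ∈ range (k + 1), (-x i) ^ j * eval x (esymm σ R (k - j)) := by
  have hX : (eval x ∘ X : σ → R) = x := by ext j; exact eval_X j
  rw [pderiv_esymm_succ_s3, Multiset.map_esymm, Multiset.map_map, hX]
  induction k with
  | zero => simp
  | succ k ih =>
    have hcons := Multiset.esymm_cons_succ_s3 (x i) ((univ.erase i).val.map x) k
    rw [← univ_val_map_eq_cons, ← eval_esymm] at hcons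
    simp_rw [sum_range_succ' _ (k + 1), Nat.add_sub_add_right, Nat.sub_zero, pow_succ', mul_assoc,
      ← mul_sum, ← ih]
    linear_combination -hcons

end MvPolynomial

/-- **Case 18, generic singularities.** If `β·c² + (3α + 4β) = 0`, then the point
`η = (1,1,1,1,−1,−1,−1,−1,c,−c)` satisfies `S₁(η) = 0` and is a singular point of the
hyperquintic `Q_{(α:β)} = {α·S₅ + β·S₂·S₃ = 0}` in `ℙ⁸(ℂ)`. -/
theorem case18_generic_singularity (α β c : ℂ)
    (hc : β * c ^ 2 + (3 * α + 4 * β) = 0) (η : Fin 10 → ℂ)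
    (hη : η = ![1, 1, 1, 1, -1, -1, -1, -1, c, -c]) :
    eval η (esymm (Fin 10) ℂ 1) = 0 ∧
    ∃ μ : ℂ, ∀ i, eval η (pderiv i
      (C α * esymm (Fin 10) ℂ 5 + C β * (esymm (Fin 10) ℂ 2 * esymm (Fin 10) ℂ 3))) = μ := by
  have hS : ∀ k, eval η (esymm (Fin 10) ℂ k) =
      (↑[1, 1, 1, 1, -1, -1, -1, -1, c, -c] : Multiset ℂ).esymm k := by
    intro k
    rw [eval_esymm, Fin.univ_val_map, hη]
    rfl
  obtain ⟨hS1, hS2, hS3, hS4⟩ : eval η (esymm (Fin 10) ℂ 1) = 0 ∧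
      eval η (esymm (Fin 10) ℂ 2) = -(4 + c ^ 2) ∧ eval η (esymm (Fin 10) ℂ 3) = 0 ∧
      eval η (esymm (Fin 10) ℂ 4) = 6 + 4 * c ^ 2 := by
    refine ⟨?_, ?_, ?_, ?_⟩ <;>
    · simp only [hS, ← Multiset.cons_coe, Multiset.coe_nil, Multiset.esymm_cons_succ_s3,
        Multiset.esymm_zero_right, Multiset.esymm_zero_succ]
      ring
  refine ⟨hS1, -6 * α, fun i => ?_⟩
  have hroot : (η i ^ 2 - 1) * (η i ^ 2 - c ^ 2) = 0 := by
    subst hη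
    fin_cases i <;> simp
  rw [map_add, pderiv_C_mul, pderiv_C_mul, pderiv_mul]
  simp only [map_add, map_mul, eval_C, eval_pderiv_esymm_succ, Finset.sum_range_succ,
    Finset.sum_range_zero, Nat.reduceSub, esymm_zero, map_one, hS1, hS2, hS3, hS4]
  linear_combination (4 + c ^ 2 - η i ^ 2) * hc + α * hroot
end

section
/- (Case 7: singular lines of Q_{(1:0)}) For all b, c ∈ ℂ, the point η := (0,0,0,0,0,0,0,b,c,−b−c) ∈ ℂ^{10} satisfies S_1(η) = 0 and there exists μ ∈ ℂ with (∂S_5/∂x_i)(η) = μ for all i = 0,…,9, where S_5 is the 5th elementary symmetric polynomial in x_0,…,x_9. In particular, the hyperquintic Q_{(1:0)} = {S_5 = 0} in ℙ^8(ℂ) contains 120 singular lines of this form. -/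
/-!
Each partial derivative `∂S₅/∂xᵢ` is a sum of squarefree monomials of degree `4`, and `η` has at
most three nonzero coordinates, so every such monomial vanishes at `η`; hence all partial
derivatives vanish at `η` and one may take `μ = 0`.
-/

open MvPolynomial Finset

namespace MvPolynomial

variable {σ R : Type*} [CommSemiring R]

theorem pderiv_prod_X [DecidableEq σ] (i : σ) (t : Finset σ) :
    pderiv i (∏ j ∈ t, (X j : MvPolynomial σ R)) =
      if i ∈ t then ∏ j ∈ t.erase i, X j else 0 := by
  induction t using Finset.induction_on with
  | empty => simp
  | @insert a t ha ih =>
    rw [prod_insert ha, pderiv_mul, ih]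
    by_cases hia : i = a
    · subst hia
      simp [ha, erase_insert ha]
    · rw [pderiv_X_of_ne (Ne.symm hia), zero_mul, zero_add]
      by_cases hit : i ∈ t
      · rw [if_pos hit, if_pos (mem_insert_of_mem hit), erase_insert_of_ne (Ne.symm hia),
          prod_insert fun h => ha (mem_of_mem_erase h)]
      · simp [hit, hia]

theorem eval_prod_X_eq_zero_of_card_lt {x : σ → R} {s t : Finset σ}
    (hx : ∀ j ∉ s, x j = 0) (hst : #s < #t) : eval x (∏ j ∈ t, X j) = 0 := by
  obtain ⟨j, hjt, hjs⟩ := exists_mem_notMem_of_card_lt_card hst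
  simpa [map_prod] using prod_eq_zero hjt (hx j hjs)

theorem eval_pderiv_esymm_succ_eq_zero [Fintype σ] [DecidableEq σ] {x : σ → R}
    {s : Finset σ} {k : ℕ} (hx : ∀ j ∉ s, x j = 0) (hs : #s < k) (i : σ) :
    eval x (pderiv i (esymm σ R (k + 1))) = 0 := by
  rw [esymm, map_sum, map_sum]
  refine sum_eq_zero fun t ht => ?_
  rw [pderiv_prod_X]
  split_ifs with hit
  · refine eval_prod_X_eq_zero_of_card_lt hx ?_
    rwa [card_erase_of_mem hit, (mem_powersetCard.mp ht).2, Nat.add_sub_cancel]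
  · exact map_zero _

end MvPolynomial

/-- **Case 7, singular lines of `Q_{(1:0)}`.** For all `b, c ∈ ℂ`, the point
`η = (0,0,0,0,0,0,0,b,c,−b−c)` satisfies `S₁(η) = 0` and is a singular point of the
hyperquintic `Q_{(1:0)} = {S₅ = 0}` in `ℙ⁸(ℂ)`; these points form 120 singular lines. -/
theorem case7_singular_lines (b c : ℂ) (η : Fin 10 → ℂ)
    (hη : η = ![0, 0, 0, 0, 0, 0, 0, b, c, -b - c]) :
    eval η (esymm (Fin 10) ℂ 1) = 0 ∧
    ∃ μ : ℂ, ∀ i, eval η (pderiv i (esymm (Fin 10) ℂ 5)) = μ := by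
  subst hη
  refine ⟨?_, 0, eval_pderiv_esymm_succ_eq_zero (s := {7, 8, 9}) ?_ (by decide)⟩
  · simp [esymm_one, Fin.sum_univ_succ]
  · intro j hj
    fin_cases j <;> simp_all
end
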